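/- arXiv:1412.8058 — 7 statements merged into one kernel-verified Lean document; each statement's English description precedes it below -/
import Mathlib

section
/- Let (R,d) be a commutative k-algebra with a λ-derivation d. Then for all x, y ∈ R and all n ∈ ℕ, the n-th iterate of d satisfies d^{(n)}(xy) = Σ_{k=0}^{n} Σ_{j=0}^{n-k} binom(n,k)·binom(n-k,j)·λ^k·d^{(n-j)}(x)·d^{(k+j)}(y). -/
open Finset

section Aux

variable {k A : Type*} [CommRing k] [CommRing A] [Algebra k A]

/-- shift in the first coordinate -/
def lshift1 : Module.End k ((ℕ × ℕ) → A) where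
  toFun f := fun p => f (p.1 + 1, p.2)
  map_add' _ _ := rfl
  map_smul' _ _ := rfl

/-- shift in the second coordinate -/
def lshift2 : Module.End k ((ℕ × ℕ) → A) where
  toFun f := fun p => f (p.1, p.2 + 1)
  map_add' _ _ := rfl
  map_smul' _ _ := rfl

/-- apply d to values -/
def ldOp (d : A →ₗ[k] A) : Module.End k ((ℕ × ℕ) → A) where
  toFun f := fun p => d (f p)
  map_add' f g := by funext p; simp
  map_smul' c f := by funext p; simp

lemma lshift1_pow_apply (a : ℕ) (f : (ℕ × ℕ) → A) (p : ℕ × ℕ) :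
    ((lshift1 : Module.End k ((ℕ × ℕ) → A)) ^ a) f p = f (p.1 + a, p.2) := by
  induction a generalizing p with
  | zero => rfl
  | succ a ih =>
    rw [pow_succ', Module.End.mul_apply]
    show ((lshift1 : Module.End k ((ℕ × ℕ) → A)) ^ a) f (p.1 + 1, p.2) = _
    rw [ih]
    have : p.1 + 1 + a = p.1 + (a + 1) := by omega
    rw [this]

lemma lshift2_pow_apply (a : ℕ) (f : (ℕ × ℕ) → A) (p : ℕ × ℕ) :
    ((lshift2 : Module.End k ((ℕ × ℕ) → A)) ^ a) f p = f (p.1, p.2 + a) := by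
  induction a generalizing p with
  | zero => rfl
  | succ a ih =>
    rw [pow_succ', Module.End.mul_apply]
    show ((lshift2 : Module.End k ((ℕ × ℕ) → A)) ^ a) f (p.1, p.2 + 1) = _
    rw [ih]
    have : p.2 + 1 + a = p.2 + (a + 1) := by omega
    rw [this]

lemma ldOp_pow_apply (d : A →ₗ[k] A) (a : ℕ) (f : (ℕ × ℕ) → A) (p : ℕ × ℕ) :
    ((ldOp d) ^ a) f p = (⇑d)^[a] (f p) := by
  induction a generalizing f with
  | zero => rfl
  | succ a ih =>
    rw [pow_succ, Module.End.mul_apply, ih, Function.iterate_succ_apply]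
    rfl

lemma lshift_comm : Commute (lshift1 : Module.End k ((ℕ × ℕ) → A)) lshift2 :=
  LinearMap.ext fun _ => rfl

lemma ldOp_comm1 (d : A →ₗ[k] A) : Commute (ldOp d) (lshift1 : Module.End k ((ℕ × ℕ) → A)) :=
  LinearMap.ext fun _ => rfl

lemma ldOp_comm2 (d : A →ₗ[k] A) : Commute (ldOp d) (lshift2 : Module.End k ((ℕ × ℕ) → A)) :=
  LinearMap.ext fun _ => rfl

end Aux

set_option maxHeartbeats 1000000 in
/-- Leibniz formula for the iterates of a `λ`-derivation. -/
theorem iterate_lambda_derivation_leibniz {k A : Type*} [CommRing k] [CommRing A]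
    [Algebra k A] (lam : k) (d : A →ₗ[k] A)
    (hd : ∀ x y : A, d (x * y) = d x * y + x * d y + lam • (d x * d y))
    (hd1 : d 1 = 0) :
    ∀ (x y : A) (n : ℕ),
      (⇑d)^[n] (x * y) =
        ∑ i ∈ range (n + 1), ∑ j ∈ range (n - i + 1),
          (n.choose i * (n - i).choose j) •
            (lam ^ i • ((⇑d)^[n - j] x * (⇑d)^[i + j] y)) := by
  intro x y n
  set u : (ℕ × ℕ) → A := fun p => (⇑d)^[p.1] x * (⇑d)^[p.2] y with hu
  set T : Module.End k ((ℕ × ℕ) → A) :=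
    lam • ((lshift1 : Module.End k ((ℕ × ℕ) → A)) * lshift2) + (lshift2 + lshift1) with hT
  have hDu : ldOp d u = T u := by
    funext p
    show d ((⇑d)^[p.1] x * (⇑d)^[p.2] y) = _
    rw [hd]
    show _ = lam • (u (p.1 + 1, p.2 + 1)) + (u (p.1, p.2 + 1) + u (p.1 + 1, p.2))
    simp only [hu, Function.iterate_succ_apply' d]
    abel
  have hDT : Commute (ldOp d) T := by
    exact Commute.add_right
      (Commute.smul_right ((ldOp_comm1 d).mul_right (ldOp_comm2 d)) lam)
      (Commute.add_right (ldOp_comm2 d) (ldOp_comm1 d))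
  have key : ∀ m : ℕ, ((ldOp d) ^ m) u = (T ^ m) u := by
    intro m
    induction m with
    | zero => rfl
    | succ m ih =>
      rw [pow_succ', Module.End.mul_apply, ih, ← Module.End.mul_apply, (hDT.pow_right m).eq,
        Module.End.mul_apply, hDu, ← Module.End.mul_apply, ← pow_succ]
  have hmain : (⇑d)^[n] (x * y) = ((T ^ n) u) (0, 0) := by
    rw [← key, ldOp_pow_apply]
    simp [hu]
  rw [hmain, hT]
  have hc : Commute (lam • ((lshift1 : Module.End k ((ℕ × ℕ) → A)) * lshift2))
      (lshift2 + lshift1) :=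
    Commute.smul_left
      (Commute.add_right (Commute.mul_left lshift_comm (Commute.refl _))
        (Commute.mul_left (Commute.refl _) lshift_comm.symm)) lam
  have hc2 : Commute (lshift2 : Module.End k ((ℕ × ℕ) → A)) lshift1 := lshift_comm.symm
  rw [hc.add_pow, LinearMap.sum_apply, Finset.sum_apply]
  refine Finset.sum_congr rfl fun i hi => ?_
  have hi' : i ≤ n := Nat.lt_succ_iff.mp (Finset.mem_range.mp hi)
  rw [hc2.add_pow, Finset.mul_sum, Finset.sum_mul, LinearMap.sum_apply, Finset.sum_apply]
  refine Finset.sum_congr rfl fun j hj => ?_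
  have hj' : j ≤ n - i := Nat.lt_succ_iff.mp (Finset.mem_range.mp hj)
  rw [smul_pow, lshift_comm.mul_pow]
  simp only [smul_mul_assoc, LinearMap.smul_apply, Pi.smul_apply, Module.End.mul_apply,
    Module.End.natCast_apply, map_nsmul, Pi.smul_apply, lshift1_pow_apply, lshift2_pow_apply]
  have h1 : 0 + i + (n - i - j) = n - j := by omega
  have h2 : 0 + i + j = i + j := by omega
  rw [h1, h2, mul_smul, smul_comm (lam ^ i), smul_comm (lam ^ i)]
end

section
/- Let A be a commutative k-algebra and λ ∈ k. The k-module A^ℕ of functions ℕ → A equipped with the λ-Hurwitz product (fg)(n) = Σ_{k=0}^{n} Σ_{j=0}^{n-k} binom(n,k)·binom(n-k,j)·λ^k·f(n-j)·g(k+j) is a commutative k-algebra with identity (the function sending 0 to 1 and all n > 0 to 0). -/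
open Finset

/-- The `λ`-Hurwitz product over a `k`-module `M` with respect to a
multiplication `mul`. -/
def hmulG {k M : Type*} [CommRing k] [AddCommMonoid M] [Module k M]
    (lam : k) (mul : M → M → M) (f g : ℕ → M) : ℕ → M :=
  fun n => ∑ i ∈ range (n + 1), ∑ j ∈ range (n - i + 1),
    (n.choose i * (n - i).choose j) • (lam ^ i • mul (f (n - j)) (g (i + j)))

/-- The `λ`-Hurwitz product on `A^ℕ` for a commutative `k`-algebra `A`. -/
def hmul {k A : Type*} [CommRing k] [CommRing A] [Algebra k A] (lam : k)
    (f g : ℕ → A) : ℕ → A :=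
  hmulG lam (· * ·) f g

/-- The identity of the `λ`-Hurwitz series algebra. -/
def hone {A : Type*} [CommRing A] : ℕ → A := fun n => if n = 0 then 1 else 0

/-- The shift operator `∂_A`. -/
def hshift {A : Type*} (f : ℕ → A) : ℕ → A := fun n => f (n + 1)

/-- The comultiplication-type map `δ_A`. -/
def hdel {M : Type*} (f : ℕ → M) : ℕ → ℕ → M := fun m n => f (m + n)

/-!
Grouping the terms of the `λ`-Hurwitz product by the exponent of `λ` gives
`(fg)(n) = ∑_{i+m=n} C(n,i) λ^i (∂^i f ⋆ ∂^i g)(m)`, where `⋆` is the binomial convolution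
(the `λ = 0` product) and `∂^i f = hdel f i`. Pascal's rule, applied to `⋆` and to the outer
sum, gives the Leibniz rule `∂(fg) = ∂f·g + f·∂g + λ ∂f·∂g`. Together with `(fg)(0) = f(0)g(0)`
this determines `fg` recursively, so associativity and the unit law follow by induction on `n`
for all arguments at once. Commutativity and linearity are read off the formulas.
-/

section BinomialConvolution

variable {A : Type*}

def binomConv [Semiring A] (u v : ℕ → A) (m : ℕ) : A :=
  ∑ p ∈ antidiagonal m, m.choose p.1 • (u p.1 * v p.2)

theorem binomConv_comm [CommSemiring A] (u v : ℕ → A) : binomConv u v = binomConv v u := by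
  funext m
  rw [binomConv, ← Nat.sum_antidiagonal_swap]
  refine sum_congr rfl fun p hp => ?_
  rw [Prod.fst_swap, Prod.snd_swap, mul_comm,
    Nat.choose_symm_of_eq_add (mem_antidiagonal.1 hp).symm]

theorem binomConv_succ [Semiring A] (u v : ℕ → A) (m : ℕ) :
    binomConv u v (m + 1) = binomConv (hshift u) v m + binomConv u (hshift v) m := by
  rw [binomConv, sum_antidiagonal_choose_succ_nsmul (fun i j => u i * v j), add_comm]
  congr 1
  refine sum_congr rfl fun p hp => ?_
  rw [Nat.choose_symm_of_eq_add (mem_antidiagonal.1 hp).symm]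
  rfl

theorem binomConv_apply_eq_sum_range [Semiring A] (u v : ℕ → A) (m : ℕ) :
    binomConv u v m = ∑ j ∈ range (m + 1), m.choose j • (u (m - j) * v j) := by
  rw [binomConv, ← Nat.sum_antidiagonal_swap]
  simp only [Prod.fst_swap, Prod.snd_swap]
  rw [Nat.sum_antidiagonal_eq_sum_range_succ (fun i j => m.choose j • (u j * v i))]
  refine sum_congr rfl fun j hj => ?_
  rw [Nat.choose_symm (Nat.lt_succ_iff.1 (mem_range.1 hj))]

end BinomialConvolution

theorem hshift_hdel {M : Type*} (f : ℕ → M) (i : ℕ) : hshift (hdel f i) = hdel (hshift f) i :=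
  rfl

theorem hdel_succ {M : Type*} (f : ℕ → M) (i : ℕ) : hdel f (i + 1) = hdel (hshift f) i :=
  funext fun p => congrArg f (Nat.add_right_comm i 1 p)

section HurwitzProduct

variable {k A : Type*} [CommRing k] [CommRing A] [Algebra k A] (lam : k)

theorem hmul_eq_sum_antidiagonal (f g : ℕ → A) (n : ℕ) :
    hmul lam f g n = ∑ q ∈ antidiagonal n,
      n.choose q.1 • lam ^ q.1 • binomConv (hdel f q.1) (hdel g q.1) q.2 := by
  unfold hmul hmulG
  rw [Nat.sum_antidiagonal_eq_sum_range_succ_mk]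
  refine sum_congr rfl fun i hi => ?_
  rw [binomConv_apply_eq_sum_range, smul_sum, smul_sum]
  refine sum_congr rfl fun j hj => ?_
  have hi : i ≤ n := Nat.lt_succ_iff.1 (mem_range.1 hi)
  have hj : j ≤ n - i := Nat.lt_succ_iff.1 (mem_range.1 hj)
  simp only [hdel, mul_smul, smul_comm (lam ^ i)]
  rw [show i + (n - i - j) = n - j by omega]

theorem hmul_comm (f g : ℕ → A) : hmul lam f g = hmul lam g f := by
  funext n
  simp only [hmul_eq_sum_antidiagonal, binomConv_comm (hdel f _)]

theorem hmul_succ (f g : ℕ → A) (n : ℕ) :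
    hmul lam f g (n + 1) = hmul lam (hshift f) g n + hmul lam f (hshift g) n +
      lam • hmul lam (hshift f) (hshift g) n := by
  simp only [hmul_eq_sum_antidiagonal]
  rw [sum_antidiagonal_choose_succ_nsmul (fun i m => lam ^ i • binomConv (hdel f i) (hdel g i) m)]
  congr 1
  · simp only [binomConv_succ, hshift_hdel, smul_add, sum_add_distrib]
  · rw [smul_sum]
    refine sum_congr rfl fun q hq => ?_
    rw [Nat.choose_symm_of_eq_add (mem_antidiagonal.1 hq).symm, hdel_succ, hdel_succ, pow_succ',
      mul_smul, smul_comm lam (n.choose q.2), smul_comm lam (lam ^ q.1)]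

theorem hshift_hmul (f g : ℕ → A) :
    hshift (hmul lam f g) =
      hmul lam (hshift f) g + hmul lam f (hshift g) + lam • hmul lam (hshift f) (hshift g) :=
  funext (hmul_succ lam f g)

theorem hmul_zero_apply (f g : ℕ → A) : hmul lam f g 0 = f 0 * g 0 := by
  simp [hmul, hmulG]

theorem hmul_add_right (f g h : ℕ → A) :
    hmul lam f (g + h) = hmul lam f g + hmul lam f h := by
  funext n
  simp only [hmul, hmulG, Pi.add_apply, mul_add, smul_add, sum_add_distrib]

theorem hmul_smul_right (c : k) (f g : ℕ → A) :
    hmul lam f (c • g) = c • hmul lam f g := by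
  funext n
  simp only [hmul, hmulG, Pi.smul_apply, mul_smul_comm, smul_sum, smul_comm c]

theorem hmul_zero_right (f : ℕ → A) : hmul lam f 0 = 0 := by
  simpa using hmul_smul_right lam (0 : k) f 0

theorem hmul_add_left (f g h : ℕ → A) :
    hmul lam (f + g) h = hmul lam f h + hmul lam g h := by
  simp only [hmul_comm lam _ h, hmul_add_right]

theorem hmul_smul_left (c : k) (f g : ℕ → A) :
    hmul lam (c • f) g = c • hmul lam f g := by
  simp only [hmul_comm lam _ g, hmul_smul_right]

theorem hshift_hone : hshift (hone : ℕ → A) = 0 := rfl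

theorem hmul_hone_right (f : ℕ → A) : hmul lam f hone = f := by
  funext n
  induction n generalizing f with
  | zero => simp [hmul_zero_apply, hone]
  | succ n ih => simp [hmul_succ, hshift_hone, hmul_zero_right, ih, hshift]

theorem hmul_hone_left (f : ℕ → A) : hmul lam hone f = f := by
  rw [hmul_comm, hmul_hone_right]

theorem hmul_assoc (f g h : ℕ → A) :
    hmul lam (hmul lam f g) h = hmul lam f (hmul lam g h) := by
  funext n
  induction n generalizing f g h with
  | zero => simp only [hmul_zero_apply, mul_assoc]
  | succ n ih =>
    simp only [hmul_succ, hshift_hmul, hmul_add_left, hmul_add_right, hmul_smul_left,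
      hmul_smul_right, Pi.add_apply, Pi.smul_apply, ih]
    module

end HurwitzProduct

/-- `A^ℕ` with the `λ`-Hurwitz product is a commutative `k`-algebra with
identity `hone` (the underlying `k`-module structure being pointwise). -/
theorem hurwitz_is_comm_algebra {k A : Type*} [CommRing k] [CommRing A]
    [Algebra k A] (lam : k) :
    (∀ f g : ℕ → A, hmul lam f g = hmul lam g f) ∧
    (∀ f g h : ℕ → A, hmul lam (hmul lam f g) h = hmul lam f (hmul lam g h)) ∧
    (∀ f g h : ℕ → A, hmul lam f (g + h) = hmul lam f g + hmul lam f h) ∧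
    (∀ f g h : ℕ → A, hmul lam (f + g) h = hmul lam f h + hmul lam g h) ∧
    (∀ f : ℕ → A, hmul lam hone f = f) ∧
    (∀ f : ℕ → A, hmul lam f hone = f) ∧
    (∀ (c : k) (f g : ℕ → A), hmul lam (c • f) g = c • hmul lam f g) ∧
    (∀ (c : k) (f g : ℕ → A), hmul lam f (c • g) = c • hmul lam f g) :=
  ⟨hmul_comm lam, hmul_assoc lam, hmul_add_right lam, hmul_add_left lam,
    hmul_hone_left lam, hmul_hone_right lam, hmul_smul_left lam, hmul_smul_right lam⟩
end

section
/- Let A be a commutative k-algebra and let A^ℕ be the algebra of λ-Hurwitz series over A. The shift map ∂_A : A^ℕ → A^ℕ defined by ∂_A(f)(n) = f(n+1) is a λ-derivation on A^ℕ: it is k-linear, ∂_A(fg) = ∂_A(f)g + f∂_A(g) + λ∂_A(f)∂_A(g), and ∂_A(1) = 0. -/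
open Finset

lemma hkey (n i j : ℕ) :
    (n+1).choose i * ((n+1-i).choose j) =
      n.choose i * ((n-i).choose j) +
      (if 1 ≤ j then n.choose i * ((n-i).choose (j-1)) else 0) +
      (if 1 ≤ i then n.choose (i-1) * ((n-(i-1)).choose j) else 0) := by
  match i, j with
  | 0, 0 => simp
  | 0, j+1 => simp [Nat.choose_succ_succ]; ring
  | i+1, 0 => simp [Nat.choose_succ_succ]; ring
  | i+1, j+1 =>
    simp only [Nat.succ_sub_succ, if_pos (Nat.succ_le_succ (Nat.zero_le _)),
      Nat.add_sub_cancel, Nat.sub_zero]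
    by_cases h : i < n
    · have h2 : n - i = (n - (i+1)) + 1 := by omega
      rw [Nat.choose_succ_succ n i, h2, Nat.choose_succ_succ (n - (i+1)) j]
      ring
    · have h1 : n.choose (i+1) = 0 := Nat.choose_eq_zero_of_lt (by omega)
      have h2 : n - i = 0 := by omega
      have h3 : n - (i+1) = 0 := by omega
      simp [Nat.choose_succ_succ, h1, h2, h3]

lemma sumkey {M : Type*} [AddCommMonoid M] (n : ℕ) (t : ℕ → ℕ → M) :
    ∑ i ∈ range (n+2), ∑ j ∈ range (n+2),
        ((n+1).choose i * ((n+1-i).choose j)) • t i j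
    = ∑ i ∈ range (n+2), ∑ j ∈ range (n+2),
        (n.choose i * ((n-i).choose j)) • (t i j + t i (j+1) + t (i+1) j) := by
  simp only [smul_add, Finset.sum_add_distrib]
  have hB : ∑ i ∈ range (n+2), ∑ j ∈ range (n+2),
      (if 1 ≤ j then n.choose i * ((n-i).choose (j-1)) else 0) • t i j
      = ∑ i ∈ range (n+2), ∑ j ∈ range (n+2),
        (n.choose i * ((n-i).choose j)) • t i (j+1) := by
    refine Finset.sum_congr rfl fun i _ => ?_
    conv_lhs => rw [Finset.sum_range_succ' _ (n+1)]
    conv_rhs => rw [Finset.sum_range_succ]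
    have hz : ((n-i).choose (n+1)) = 0 := Nat.choose_eq_zero_of_lt (by omega)
    simp [hz, Nat.add_sub_cancel]
  have hC : ∑ i ∈ range (n+2), ∑ j ∈ range (n+2),
      (if 1 ≤ i then n.choose (i-1) * ((n-(i-1)).choose j) else 0) • t i j
      = ∑ i ∈ range (n+2), ∑ j ∈ range (n+2),
        (n.choose i * ((n-i).choose j)) • t (i+1) j := by
    conv_lhs => rw [Finset.sum_range_succ' _ (n+1)]
    conv_rhs => rw [Finset.sum_range_succ]
    have hz : n.choose (n+1) = 0 := Nat.choose_eq_zero_of_lt (by omega)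
    simp [hz, Nat.add_sub_cancel]
  rw [← hB, ← hC]
  simp only [← Finset.sum_add_distrib, ← add_smul]
  refine Finset.sum_congr rfl fun i _ => Finset.sum_congr rfl fun j _ => ?_
  rw [hkey]

lemma hmul_eq_sum {k A : Type*} [CommRing k] [CommRing A] [Algebra k A]
    (lam : k) (f g : ℕ → A) (m N : ℕ) (h : m + 1 ≤ N) :
    hmul lam f g m = ∑ i ∈ range N, ∑ j ∈ range N,
      (m.choose i * ((m-i).choose j)) • (lam ^ i • (f (m-j) * g (i+j))) := by
  unfold hmul hmulG
  calc ∑ i ∈ range (m + 1), ∑ j ∈ range (m - i + 1),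
        (m.choose i * (m - i).choose j) • (lam ^ i • (f (m - j) * g (i + j)))
      = ∑ i ∈ range (m + 1), ∑ j ∈ range N,
        (m.choose i * (m - i).choose j) • (lam ^ i • (f (m - j) * g (i + j))) := by
        refine Finset.sum_congr rfl fun i hi => ?_
        refine Finset.sum_subset (Finset.range_subset_range.2 ?_) fun j _ hj => ?_
        · simp only [mem_range] at hi; omega
        · have : (m - i).choose j = 0 := by
            refine Nat.choose_eq_zero_of_lt ?_
            simp only [mem_range, not_lt] at hj; omega
          simp [this]
    _ = ∑ i ∈ range N, ∑ j ∈ range N,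
        (m.choose i * (m - i).choose j) • (lam ^ i • (f (m - j) * g (i + j))) := by
        refine Finset.sum_subset (Finset.range_subset_range.2 h) fun i _ hi => ?_
        have : m.choose i = 0 := by
          refine Nat.choose_eq_zero_of_lt ?_
          simp only [mem_range, not_lt] at hi; omega
        simp [this]

/-- The shift map `∂_A` is a `λ`-derivation on the `λ`-Hurwitz series
algebra `A^ℕ`. -/
theorem hshift_lambda_derivation {k A : Type*} [CommRing k] [CommRing A]
    [Algebra k A] (lam : k) :
    (∀ f g : ℕ → A, hshift (f + g) = hshift f + hshift g) ∧
    (∀ (c : k) (f : ℕ → A), hshift (c • f) = c • hshift f) ∧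
    (∀ f g : ℕ → A,
      hshift (hmul lam f g) =
        hmul lam (hshift f) g + hmul lam f (hshift g)
          + lam • hmul lam (hshift f) (hshift g)) ∧
    hshift (hone (A := A)) = 0 := by
  refine ⟨fun f g => rfl, fun c f => rfl, fun f g => ?_, ?_⟩
  · funext n
    show hmul lam f g (n + 1) = _
    simp only [Pi.add_apply, Pi.smul_apply]
    rw [hmul_eq_sum lam f g (n+1) (n+2) le_rfl,
      hmul_eq_sum lam (hshift f) g n (n+2) (by omega),
      hmul_eq_sum lam f (hshift g) n (n+2) (by omega),
      hmul_eq_sum lam (hshift f) (hshift g) n (n+2) (by omega)]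
    simp only [hshift]
    rw [sumkey n (fun i j => lam ^ i • (f (n + 1 - j) * g (i + j)))]
    simp only [smul_add, Finset.sum_add_distrib]
    have e1 : ∑ i ∈ range (n+2), ∑ j ∈ range (n+2),
        (n.choose i * ((n-i).choose j)) • (lam ^ i • (f (n + 1 - j) * g (i + j)))
        = ∑ i ∈ range (n+2), ∑ j ∈ range (n+2),
        (n.choose i * ((n-i).choose j)) • (lam ^ i • (f (n - j + 1) * g (i + j))) := by
      refine Finset.sum_congr rfl fun i _ => Finset.sum_congr rfl fun j hj => ?_
      by_cases h : j ≤ n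
      · have h1 : n + 1 - j = n - j + 1 := by omega
        rw [h1]
      · have hj' : j = n + 1 := by simp only [mem_range] at hj; omega
        subst hj'
        have : (n - i).choose (n+1) = 0 := Nat.choose_eq_zero_of_lt (by omega)
        simp [this]
    have e2 : ∑ i ∈ range (n+2), ∑ j ∈ range (n+2),
        (n.choose i * ((n-i).choose j)) • (lam ^ i • (f (n + 1 - (j+1)) * g (i + (j+1))))
        = ∑ i ∈ range (n+2), ∑ j ∈ range (n+2),
        (n.choose i * ((n-i).choose j)) • (lam ^ i • (f (n - j) * g (i + j + 1))) := by
      refine Finset.sum_congr rfl fun i _ => Finset.sum_congr rfl fun j _ => ?_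
      rw [Nat.succ_sub_succ, Nat.add_assoc]
    have e3 : ∑ i ∈ range (n+2), ∑ j ∈ range (n+2),
        (n.choose i * ((n-i).choose j)) • (lam ^ (i+1) • (f (n + 1 - j) * g (i + 1 + j)))
        = lam • ∑ i ∈ range (n+2), ∑ j ∈ range (n+2),
        (n.choose i * ((n-i).choose j)) • (lam ^ i • (f (n - j + 1) * g (i + j + 1))) := by
      rw [Finset.smul_sum]
      refine Finset.sum_congr rfl fun i _ => ?_
      rw [Finset.smul_sum]
      refine Finset.sum_congr rfl fun j hj => ?_
      by_cases h : j ≤ n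
      · have h1 : n + 1 - j = n - j + 1 := by omega
        have h2 : i + 1 + j = i + j + 1 := by omega
        rw [h1, h2, smul_comm lam (n.choose i * (n - i).choose j),
          smul_smul lam, ← pow_succ']
      · have hj' : j = n + 1 := by simp only [mem_range] at hj; omega
        subst hj'
        have : (n - i).choose (n+1) = 0 := Nat.choose_eq_zero_of_lt (by omega)
        simp [this]
    rw [e1, e2, e3]
  · funext n
    simp [hshift, hone]
end

section
/- Let A be a commutative k-algebra and let δ_A : A^ℕ → (A^ℕ)^ℕ be defined by (δ_A(f)(m))(n) = f(m+n). Then δ_A is an algebra homomorphism from the λ-Hurwitz algebra A^ℕ to the λ-Hurwitz algebra of λ-Hurwitz series (A^ℕ)^ℕ, and it satisfies ε_{A^ℕ} ∘ δ_A = id and δ_{A^ℕ} ∘ δ_A = (δ_A)^ℕ ∘ δ_A (coassociativity). -/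
open Finset

/-- Triangular sum swap. -/
lemma tri_swap {M : Type*} [AddCommMonoid M] (N : ℕ) (g : ℕ → ℕ → M) :
    ∑ i ∈ range (N + 1), ∑ a ∈ range (i + 1), g a (i - a)
      = ∑ a ∈ range (N + 1), ∑ c ∈ range (N - a + 1), g a c := by
  rw [Finset.sum_sigma' (range (N + 1)) (fun i => range (i + 1))
      (fun i a => g a (i - a)),
    Finset.sum_sigma' (range (N + 1)) (fun a => range (N - a + 1))
      (fun a c => g a c)]
  refine Finset.sum_nbij' (fun x => ⟨x.2, x.1 - x.2⟩) (fun y => ⟨y.1 + y.2, y.1⟩)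
    ?_ ?_ ?_ ?_ ?_
  · rintro ⟨i, a⟩ hx
    simp only [Finset.mem_sigma, Finset.mem_range] at *
    omega
  · rintro ⟨a, c⟩ hy
    simp only [Finset.mem_sigma, Finset.mem_range] at *
    omega
  · rintro ⟨i, a⟩ hx
    simp only [Finset.mem_sigma, Finset.mem_range] at hx
    simp only [Sigma.mk.inj_iff]
    constructor
    · omega
    · exact heq_of_eq rfl
  · rintro ⟨a, c⟩ hy
    simp only [Sigma.mk.inj_iff, Nat.add_sub_cancel_left]
  · rintro ⟨i, a⟩ hx
    rfl

/-- Trinomial Vandermonde identity in summed form. -/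
lemma quad {M : Type*} [AddCommMonoid M] (m n : ℕ) (F : ℕ → ℕ → M) :
    ∑ i ∈ range (m + n + 1), ∑ j ∈ range (m + n - i + 1),
      (Nat.choose (m + n) i * Nat.choose (m + n - i) j) • F i j
    = ∑ a ∈ range (m + 1), ∑ b ∈ range (m - a + 1), ∑ c ∈ range (n + 1),
        ∑ d ∈ range (n - c + 1),
        (Nat.choose m a * Nat.choose (m - a) b *
          (Nat.choose n c * Nat.choose (n - c) d)) • F (a + c) (b + d) := by
  set N := m + n with hN
  calc
    ∑ i ∈ range (N + 1), ∑ j ∈ range (N - i + 1),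
        (Nat.choose N i * Nat.choose (N - i) j) • F i j
      = ∑ i ∈ range (N + 1), ∑ j ∈ range (N + 1),
          (Nat.choose N i * Nat.choose (N - i) j) • F i j := by
        refine Finset.sum_congr rfl fun i hi => ?_
        refine Finset.sum_subset ?_ ?_
        · exact Finset.range_subset_range.2 (by simp only [Finset.mem_range] at hi; omega)
        · intro j hj hj'
          simp only [Finset.mem_range] at hi hj hj'
          rw [Nat.choose_eq_zero_of_lt (show N - i < j by omega), mul_zero,
            zero_smul]
    _ = ∑ i ∈ range (N + 1), ∑ a ∈ range (i + 1),
          ∑ j ∈ range (N + 1),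
            (Nat.choose m a * Nat.choose n (i - a) * Nat.choose (N - i) j)
              • F i j := by
        refine Finset.sum_congr rfl fun i hi => ?_
        rw [Finset.sum_comm]
        refine Finset.sum_congr rfl fun j hj => ?_
        rw [Nat.add_choose_eq m n i,
          Finset.Nat.sum_antidiagonal_eq_sum_range_succ_mk, Finset.sum_mul,
          Finset.sum_smul]
    _ = ∑ i ∈ range (N + 1), ∑ a ∈ range (i + 1),
          (fun a c => ∑ j ∈ range (N + 1),
            (Nat.choose m a * Nat.choose n c * Nat.choose (N - (a + c)) j)
              • F (a + c) j) a (i - a) := by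
        refine Finset.sum_congr rfl fun i hi => Finset.sum_congr rfl fun a ha => ?_
        simp only [Finset.mem_range] at hi ha
        have h : a + (i - a) = i := by omega
        simp only [h]
    _ = ∑ a ∈ range (N + 1), ∑ c ∈ range (N - a + 1),
          ∑ j ∈ range (N + 1),
            (Nat.choose m a * Nat.choose n c * Nat.choose (N - (a + c)) j)
              • F (a + c) j :=
        tri_swap N (fun a c => ∑ j ∈ range (N + 1),
          (Nat.choose m a * Nat.choose n c * Nat.choose (N - (a + c)) j)
            • F (a + c) j)
    _ = ∑ a ∈ range (m + 1), ∑ c ∈ range (n + 1),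
          ∑ j ∈ range (N + 1),
            (Nat.choose m a * Nat.choose n c * Nat.choose (N - (a + c)) j)
              • F (a + c) j := by
        rw [← Finset.sum_subset (Finset.range_subset_range.2 (by omega) :
            range (m + 1) ⊆ range (N + 1))]
        · refine Finset.sum_congr rfl fun a ha => ?_
          simp only [Finset.mem_range] at ha
          refine (Finset.sum_subset (Finset.range_subset_range.2 (by omega)) ?_).symm
          intro c hc hc'
          simp only [Finset.mem_range] at hc hc'
          refine Finset.sum_eq_zero fun j hj => ?_
          rw [Nat.choose_eq_zero_of_lt (show n < c by omega)]
          simp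
        · intro a ha ha'
          simp only [Finset.mem_range] at ha ha'
          refine Finset.sum_eq_zero fun c hc => Finset.sum_eq_zero fun j hj => ?_
          rw [Nat.choose_eq_zero_of_lt (show m < a by omega)]
          simp
    _ = ∑ a ∈ range (m + 1), ∑ c ∈ range (n + 1),
          ∑ b ∈ range (m - a + 1), ∑ d ∈ range (n - c + 1),
            (Nat.choose m a * Nat.choose n c *
              (Nat.choose (m - a) b * Nat.choose (n - c) d))
              • F (a + c) (b + d) := by
        refine Finset.sum_congr rfl fun a ha => Finset.sum_congr rfl fun c hc => ?_
        simp only [Finset.mem_range] at ha hc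
        calc
          ∑ j ∈ range (N + 1),
              (Nat.choose m a * Nat.choose n c * Nat.choose (N - (a + c)) j)
                • F (a + c) j
            = ∑ j ∈ range (N + 1), ∑ b ∈ range (j + 1),
                (fun b d => (Nat.choose m a * Nat.choose n c *
                  (Nat.choose (m - a) b * Nat.choose (n - c) d))
                  • F (a + c) (b + d)) b (j - b) := by
              refine Finset.sum_congr rfl fun j hj => ?_
              have h1 : N - (a + c) = (m - a) + (n - c) := by omega
              rw [h1, Nat.add_choose_eq,
                Finset.Nat.sum_antidiagonal_eq_sum_range_succ_mk,
                Finset.mul_sum, Finset.sum_smul]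
              refine Finset.sum_congr rfl fun b hb => ?_
              simp only [Finset.mem_range] at hb
              have h2 : b + (j - b) = j := by omega
              simp only [h2]
          _ = ∑ b ∈ range (N + 1), ∑ d ∈ range (N - b + 1),
                (Nat.choose m a * Nat.choose n c *
                  (Nat.choose (m - a) b * Nat.choose (n - c) d))
                  • F (a + c) (b + d) :=
              tri_swap N (fun b d => (Nat.choose m a * Nat.choose n c *
                (Nat.choose (m - a) b * Nat.choose (n - c) d))
                • F (a + c) (b + d))
          _ = ∑ b ∈ range (m - a + 1), ∑ d ∈ range (n - c + 1),
                (Nat.choose m a * Nat.choose n c *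
                  (Nat.choose (m - a) b * Nat.choose (n - c) d))
                  • F (a + c) (b + d) := by
              rw [← Finset.sum_subset (Finset.range_subset_range.2 (by omega) :
                  range (m - a + 1) ⊆ range (N + 1))]
              · refine Finset.sum_congr rfl fun b hb => ?_
                simp only [Finset.mem_range] at hb
                refine (Finset.sum_subset (Finset.range_subset_range.2 (by omega)) ?_).symm
                intro d hd hd'
                simp only [Finset.mem_range] at hd hd'
                rw [Nat.choose_eq_zero_of_lt (show n - c < d by omega)]
                simp
              · intro b hb hb'
                simp only [Finset.mem_range] at hb hb'
                refine Finset.sum_eq_zero fun d hd => ?_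
                rw [Nat.choose_eq_zero_of_lt (show m - a < b by omega)]
                simp
    _ = ∑ a ∈ range (m + 1), ∑ b ∈ range (m - a + 1), ∑ c ∈ range (n + 1),
          ∑ d ∈ range (n - c + 1),
          (Nat.choose m a * Nat.choose (m - a) b *
            (Nat.choose n c * Nat.choose (n - c) d)) • F (a + c) (b + d) := by
        refine Finset.sum_congr rfl fun a ha => ?_
        rw [Finset.sum_comm]
        refine Finset.sum_congr rfl fun b hb => Finset.sum_congr rfl fun c hc => ?_
        refine Finset.sum_congr rfl fun d hd => ?_
        congr 1
        ring

/-- `δ_A : A^ℕ → (A^ℕ)^ℕ`, `(δ_A f m) n = f (m+n)`, is an algebra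
homomorphism from the `λ`-Hurwitz algebra `A^ℕ` to the `λ`-Hurwitz algebra
over `A^ℕ`, satisfies `ε_{A^ℕ} ∘ δ_A = id`, and is coassociative. -/
theorem hdel_algebra_hom_coassoc {k A : Type*} [CommRing k] [CommRing A]
    [Algebra k A] (lam : k) :
    (∀ f g : ℕ → A,
      hdel (hmul lam f g) = hmulG lam (hmul lam) (hdel f) (hdel g)) ∧
    (∀ f g : ℕ → A, hdel (f + g) = hdel f + hdel g) ∧
    (∀ (c : k) (f : ℕ → A), hdel (c • f) = c • hdel f) ∧
    hdel (hone (A := A)) = (fun m => if m = 0 then (hone : ℕ → A) else 0) ∧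
    (∀ f : ℕ → A, hdel f 0 = f) ∧
    (∀ f : ℕ → A, hdel (hdel f) = fun m => hdel (hdel f m)) := by
  refine ⟨?_, ?_, ?_, ?_, ?_, ?_⟩
  · intro f g
    funext m n
    simp only [hdel, hmul, hmulG, Finset.sum_apply, Pi.smul_apply]
    rw [quad m n (fun i j => lam ^ i • (f (m + n - j) * g (i + j)))]
    refine Finset.sum_congr rfl fun a ha => Finset.sum_congr rfl fun b hb => ?_
    simp only [Finset.mem_range] at ha hb
    simp only [Finset.smul_sum]
    refine Finset.sum_congr rfl fun c hc => Finset.sum_congr rfl fun d hd => ?_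
    simp only [Finset.mem_range] at hc hd
    have h1 : m - b + (n - d) = m + n - (b + d) := by omega
    have h2 : a + b + (c + d) = a + c + (b + d) := by omega
    rw [h1, h2]
    simp only [pow_add, nsmul_eq_mul, Algebra.smul_def, map_mul]
    push_cast
    ring
  · intro f g; rfl
  · intro c f; rfl
  · funext m n
    simp only [hdel, hone]
    by_cases hm : m = 0
    · subst hm; simp [hone]
    · simp [hm, Nat.add_eq_zero, Pi.zero_apply]
  · intro f; funext n; simp [hdel]
  · intro f; funext m n p; simp [hdel, add_assoc]
end

section
/- Let (R,d) be a commutative k-algebra with a λ-derivation d. Define d̃ : R → R^ℕ by (d̃(a))(n) = d^{(n)}(a). Then d̃ is a homomorphism of k-algebras from R to the λ-Hurwitz series algebra R^ℕ, satisfying ε_R ∘ d̃ = id_R and δ_R ∘ d̃ = d̃^ℕ ∘ d̃. -/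
/-!
On `R ⊗ R` the operators `D₁ = d ⊗ 1` and `D₂ = 1 ⊗ d` commute, and the `λ`-Leibniz rule says
`d ∘ μ = μ ∘ (D₁ + D₂ + λ D₁ D₂)` for the multiplication `μ : R ⊗ R → R`. Hence
`d^n ∘ μ = μ ∘ (D₁ + D₂ + λ D₁ D₂)^n`, and expanding this power as a trinomial in commuting
operators produces exactly the coefficients `C(n,i) C(n-i,j) λ^i` of the `λ`-Hurwitz product.
-/

open Finset

theorem Commute.add_add_smul_mul_pow {k A : Type*} [CommSemiring k] [Semiring A] [Algebra k A]
    {x y : A} (h : Commute x y) (c : k) (n : ℕ) :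
    (x + y + c • (x * y)) ^ n = ∑ i ∈ range (n + 1), ∑ j ∈ range (n - i + 1),
      (n.choose i * (n - i).choose j) • (c ^ i • (x ^ (n - j) * y ^ (i + j))) := by
  have hxy : Commute (c • (x * y)) (y + x) :=
    ((h.mul_left (Commute.refl y)).add_right ((Commute.refl x).mul_left h.symm)).smul_left c
  rw [add_comm (x + y), add_comm x, hxy.add_pow]
  refine sum_congr rfl fun i hi => ?_
  rw [h.symm.add_pow, mul_sum, sum_mul]
  refine sum_congr rfl fun j hj => ?_
  have hpow : x ^ i * y ^ i * (y ^ j * x ^ (n - i - j)) = x ^ (n - j) * y ^ (i + j) := by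
    have hij : i + (n - i - j) = n - j := by simp only [mem_range] at hi hj; omega
    rw [mul_assoc, ← mul_assoc (y ^ i), ← pow_add, (h.symm.pow_pow _ _).eq, ← mul_assoc,
      ← pow_add, hij]
  rw [smul_pow, h.mul_pow, ← nsmul_eq_mul', ← nsmul_eq_mul', smul_mul_assoc, mul_smul_comm,
    hpow, smul_comm (c ^ i), smul_smul]

open TensorProduct

section LambdaDerivation

variable {k R : Type*} [CommSemiring k] [CommSemiring R] [Algebra k R] {lam : k}
  {d : R →ₗ[k] R}

theorem comp_mul'_of_lambda_derivation
    (hd : ∀ x y : R, d (x * y) = d x * y + x * d y + lam • (d x * d y)) :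
    d ∘ₗ LinearMap.mul' k R =
      LinearMap.mul' k R ∘ₗ (map d 1 + map 1 d + lam • (map d 1 * map 1 d)) := by
  ext x y
  simp [hd]

theorem pow_apply_mul_of_lambda_derivation
    (hd : ∀ x y : R, d (x * y) = d x * y + x * d y + lam • (d x * d y)) (n : ℕ) (a b : R) :
    (d ^ n) (a * b) = ∑ i ∈ range (n + 1), ∑ j ∈ range (n - i + 1),
      (n.choose i * (n - i).choose j) • (lam ^ i • ((d ^ (n - j)) a * (d ^ (i + j)) b)) := by
  have hXY : Commute (map d 1 : Module.End k (R ⊗[k] R)) (map 1 d) := by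
    rw [Commute, SemiconjBy, ← TensorProduct.map_mul, ← TensorProduct.map_mul, mul_one, one_mul]
  calc (d ^ n) (a * b) = ((d ^ n) ∘ₗ LinearMap.mul' k R) (a ⊗ₜ b) := by simp
    _ = LinearMap.mul' k R
        (((map d 1 + map 1 d + lam • (map d 1 * map 1 d) : Module.End k (R ⊗[k] R)) ^ n)
          (a ⊗ₜ b)) := by
      rw [Module.End.commute_pow_left_of_commute (comp_mul'_of_lambda_derivation hd)]; rfl
    _ = _ := by
      rw [hXY.add_add_smul_mul_pow]
      simp only [LinearMap.sum_apply, LinearMap.smul_apply, map_sum, map_smul, map_nsmul,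
        TensorProduct.map_pow, one_pow, ← TensorProduct.map_mul, mul_one, one_mul,
        TensorProduct.map_tmul, LinearMap.mul'_apply]

end LambdaDerivation

theorem iterate_mul_eq_hmul {k R : Type*} [CommRing k] [CommRing R] [Algebra k R] {lam : k}
    {d : R →ₗ[k] R} (hd : ∀ x y : R, d (x * y) = d x * y + x * d y + lam • (d x * d y))
    (a b : R) :
    (fun n => (⇑d)^[n] (a * b)) = hmul lam (fun n => (⇑d)^[n] a) (fun n => (⇑d)^[n] b) := by
  funext n
  simp only [hmul, hmulG, ← Module.End.pow_apply]
  exact pow_apply_mul_of_lambda_derivation hd n a b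

theorem iterate_one_eq_hone {R F : Type*} [CommRing R] [FunLike F R R] [ZeroHomClass F R R]
    (f : F) (h : f 1 = 0) : (fun n => (⇑f)^[n] (1 : R)) = hone := by
  funext n
  cases n with
  | zero => rfl
  | succ n => rw [Function.iterate_succ_apply, h, iterate_map_zero]; rfl

/-- For a `λ`-derivation `d` on `R`, the map `d̃ : R → R^ℕ`,
`(d̃ a) n = d^{(n)} a`, is an algebra homomorphism into the `λ`-Hurwitz
series algebra with `ε_R ∘ d̃ = id` and `δ_R ∘ d̃ = d̃^ℕ ∘ d̃`. -/
theorem hurwitz_hom_of_derivation {k R : Type*} [CommRing k] [CommRing R]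
    [Algebra k R] (lam : k) (d : R →ₗ[k] R)
    (hd : ∀ x y : R, d (x * y) = d x * y + x * d y + lam • (d x * d y))
    (hd1 : d 1 = 0) :
    (∀ a b : R,
      (fun n => (⇑d)^[n] (a * b)) =
        hmul lam (fun n => (⇑d)^[n] a) (fun n => (⇑d)^[n] b)) ∧
    (∀ a b : R,
      (fun n => (⇑d)^[n] (a + b)) =
        (fun n => (⇑d)^[n] a) + fun n => (⇑d)^[n] b) ∧
    (∀ (c : k) (a : R),
      (fun n => (⇑d)^[n] (c • a)) = c • fun n => (⇑d)^[n] a) ∧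
    (fun n => (⇑d)^[n] (1 : R)) = hone ∧
    (∀ a : R, (⇑d)^[0] a = a) ∧
    (∀ a : R,
      hdel (fun n => (⇑d)^[n] a) = fun m n => (⇑d)^[n] ((⇑d)^[m] a)) := by
  refine ⟨fun a b => iterate_mul_eq_hmul hd a b,
    fun a b => funext fun n => iterate_map_add d n a b, fun c a => funext fun n => ?_,
    iterate_one_eq_hone d hd1, fun a => rfl, fun a => funext₂ fun m n => ?_⟩
  · simp only [← Module.End.pow_apply, map_smul, Pi.smul_apply]
  · rw [hdel, add_comm, Function.iterate_add_apply]
end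

section
/- Let A be a commutative k-algebra with identity 1. On the k-module Ш(A) = ⊕_{i≥1} A^{⊗i}, define the product ⋄ recursively: for pure tensors 𝔞 = a_0⊗⋯⊗a_m and 𝔟 = b_0⊗⋯⊗b_n, if m = 0 or n = 0 then 𝔞⋄𝔟 multiplies the zeroth components and concatenates the rest; if m,n > 0 then 𝔞⋄𝔟 = (a_0b_0) ⊗ ((a_1⊗⋯⊗a_m)⋄(1⊗b_1⊗⋯⊗b_n) + (1⊗a_1⊗⋯⊗a_m)⋄(b_1⊗⋯⊗b_n) + λ(a_1⊗⋯⊗a_m)⋄(b_1⊗⋯⊗b_n)). Then ⋄ makes Ш(A) a commutative k-algebra with identity 1 ∈ A. -/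
/-- The mixable shuffle product of weight `λ` makes `Ш(A) = ⊕_{i ≥ 1} A^{⊗i}`
a commutative `k`-algebra with identity `1 ∈ A`.  Here `Ш(A)` is presented
abstractly: `S` is a `k`-module spanned by pure tensors `t n x` of length
`n+1`, `pre a` is the operation of prepending `a ⊗ -`, and `mul` is the
`k`-bilinear product characterized by the recursion defining the mixable
shuffle product. -/
theorem mixable_shuffle_comm_algebra {k A S : Type*} [CommRing k] [CommRing A]
    [Algebra k A] [AddCommGroup S] [Module k S] (lam : k)
    (t : ∀ n : ℕ, MultilinearMap k (fun _ : Fin (n + 1) => A) S)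
    (pre : A →ₗ[k] S →ₗ[k] S)
    (hpre : ∀ (a : A) (n : ℕ) (x : Fin (n + 1) → A),
      pre a (t n x) = t (n + 1) (Fin.cons a x))
    (hspan : Submodule.span k {s : S | ∃ n x, s = t n x} = ⊤)
    (mul : S →ₗ[k] S →ₗ[k] S)
    (h0l : ∀ (a : A) (n : ℕ) (b : Fin (n + 1) → A),
      mul (t 0 fun _ => a) (t n b) = t n (Function.update b 0 (a * b 0)))
    (h0r : ∀ (n : ℕ) (a : Fin (n + 1) → A) (b : A),
      mul (t n a) (t 0 fun _ => b) = t n (Function.update a 0 (a 0 * b)))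
    (hrec : ∀ (m n : ℕ) (a : Fin (m + 2) → A) (b : Fin (n + 2) → A),
      mul (t (m + 1) a) (t (n + 1) b) =
        pre (a 0 * b 0)
          (mul (t m (Fin.tail a)) (t (n + 1) (Fin.cons 1 (Fin.tail b)))
            + mul (t (m + 1) (Fin.cons 1 (Fin.tail a))) (t n (Fin.tail b))
            + lam • mul (t m (Fin.tail a)) (t n (Fin.tail b)))) :
    (∀ x y : S, mul x y = mul y x) ∧
    (∀ x y z : S, mul (mul x y) z = mul x (mul y z)) ∧
    (∀ x : S, mul (t 0 fun _ => (1 : A)) x = x) ∧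
    (∀ x : S, mul x (t 0 fun _ => (1 : A)) = x) := by
  classical
  -- basic helpers
  have h1 : ∀ (b : Fin 1 → A), t 0 b = t 0 (fun _ => b 0) := by
    intro b; congr 1; funext i; rw [Subsingleton.elim i 0]
  have hupd : ∀ (n : ℕ) (b : Fin (n + 2) → A) (v : A),
      Function.update b 0 v = Fin.cons v (Fin.tail b) := by
    intro n b v
    conv_lhs => rw [← Fin.cons_self_tail b]
    rw [Fin.update_cons_zero]
  have extt1 : ∀ (f g : S →ₗ[k] S),
      (∀ (n : ℕ) (x : Fin (n + 1) → A), f (t n x) = g (t n x)) → ∀ s, f s = g s := by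
    intro f g h s
    have : f = g := LinearMap.ext_on hspan (by rintro _ ⟨n, x, rfl⟩; exact h n x)
    rw [this]
  have extt2 : ∀ (F G : S →ₗ[k] S →ₗ[k] S),
      (∀ (m : ℕ) (a : Fin (m + 1) → A) (n : ℕ) (b : Fin (n + 1) → A),
        F (t m a) (t n b) = G (t m a) (t n b)) → ∀ u v, F u v = G u v := by
    intro F G h u v
    have : F = G := LinearMap.ext_on hspan (by
      rintro _ ⟨m, a, rfl⟩
      exact LinearMap.ext_on hspan (by rintro _ ⟨n, b, rfl⟩; exact h m a n b))
    rw [this]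
  -- scalar multiplication lemmas
  have hscal0 : ∀ (a : A) (b : Fin 1 → A),
      mul (t 0 fun _ => a) (t 0 b) = t 0 (fun _ => a * b 0) := by
    intro a b
    rw [h1 b, h0l]
    congr 1
    funext i
    obtain rfl : i = 0 := by have := i.isLt; exact Fin.ext (by omega)
    simp
  have hLpre : ∀ (a c : A) (s : S), mul (t 0 fun _ => a) (pre c s) = pre (a * c) s := by
    intro a c
    exact extt1 ((mul (t 0 fun _ => a)) ∘ₗ (pre c)) (pre (a * c)) (fun n x => by
      show mul (t 0 fun _ => a) (pre c (t n x)) = pre (a * c) (t n x)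
      rw [hpre, h0l, hpre]
      congr 1
      simp [Fin.update_cons_zero])
  have hRpre : ∀ (d c : A) (s : S), mul (pre d s) (t 0 fun _ => c) = pre (d * c) s := by
    intro d c
    exact extt1 ((mul.flip (t 0 fun _ => c)) ∘ₗ (pre d)) (pre (d * c)) (fun n x => by
      show mul (pre d (t n x)) (t 0 fun _ => c) = pre (d * c) (t n x)
      rw [hpre, h0r, hpre]
      congr 1
      simp [Fin.update_cons_zero])
  have hscal : ∀ (a : A) (n : ℕ) (b : Fin (n + 2) → A),
      mul (t 0 fun _ => a) (t (n + 1) b) = pre (a * b 0) (t n (Fin.tail b)) := by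
    intro a n b
    rw [h0l, hupd, ← hpre]
  have hscalr : ∀ (n : ℕ) (b : Fin (n + 2) → A) (c : A),
      mul (t (n + 1) b) (t 0 fun _ => c) = pre (b 0 * c) (t n (Fin.tail b)) := by
    intro n b c
    rw [h0r, hupd, ← hpre]
  -- the key recursion for prepended elements
  have K : ∀ (x y : A) (r s : S),
      mul (pre x r) (pre y s)
        = pre (x * y) (mul r (pre 1 s) + mul (pre 1 r) s + lam • mul r s) := by
    intro x y
    exact extt2 ((mul ∘ₗ (pre x)).compl₂ (pre y))
      ((mul.compl₂ (pre 1) + mul ∘ₗ (pre 1) + lam • mul).compr₂ (pre (x * y)))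
      (fun n r p s => by
        show mul (pre x (t n r)) (pre y (t p s))
            = pre (x * y) (mul (t n r) (pre 1 (t p s)) + mul (pre 1 (t n r)) (t p s)
                + lam • mul (t n r) (t p s))
        rw [hpre, hpre, hpre, hpre, hrec]
        simp)
  -- commutativity
  have comm_pure : ∀ (N m n : ℕ) (a : Fin (m + 1) → A) (b : Fin (n + 1) → A), m + n ≤ N →
      mul (t m a) (t n b) = mul (t n b) (t m a) := by
    intro N
    induction N with
    | zero =>
      intro m n a b h
      obtain rfl : m = 0 := by omega
      rw [h1 a, h0l, h0r, mul_comm (a 0) (b 0)]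
    | succ N ih =>
      intro m n a b h
      match m, n, a, b, h with
      | 0, n, a, b, h => rw [h1 a, h0l, h0r, mul_comm (a 0) (b 0)]
      | m+1, 0, a, b, h => rw [h1 b, h0r, h0l, mul_comm (a 0) (b 0)]
      | m+1, n+1, a, b, h =>
        rw [hrec, hrec,
          ih m (n+1) (Fin.tail a) (Fin.cons 1 (Fin.tail b)) (by omega),
          ih (m+1) n (Fin.cons 1 (Fin.tail a)) (Fin.tail b) (by omega),
          ih m n (Fin.tail a) (Fin.tail b) (by omega),
          mul_comm (a 0) (b 0)]
        congr 1
        abel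
  have comm : ∀ u v : S, mul u v = mul v u :=
    extt2 mul mul.flip (fun m a n b => comm_pure (m + n) m n a b le_rfl)
  -- left scalar associativity
  have Lassoc_pure : ∀ (a : A) (n p : ℕ) (b : Fin (n + 1) → A) (c : Fin (p + 1) → A),
      mul (mul (t 0 fun _ => a) (t n b)) (t p c)
        = mul (t 0 fun _ => a) (mul (t n b) (t p c)) := by
    intro a n p b c
    match n, p, b, c with
    | 0, p, b, c =>
      rw [hscal0, h0l, h1 b, h0l, h0l]
      simp [Function.update_idem, mul_assoc]
    | n+1, 0, b, c =>
      rw [h1 c, hscal, hRpre, hscalr, hLpre, mul_assoc]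
    | n+1, p+1, b, c =>
      have hbp : t (n+1) b = pre (b 0) (t n (Fin.tail b)) := by
        rw [hpre, Fin.cons_self_tail]
      have hcp : t (p+1) c = pre (c 0) (t p (Fin.tail c)) := by
        rw [hpre, Fin.cons_self_tail]
      rw [hscal, hcp, K, hbp, K, hLpre, mul_assoc]
  have Lassoc : ∀ (a : A) (u v : S),
      mul (mul (t 0 fun _ => a) u) v = mul (t 0 fun _ => a) (mul u v) := by
    intro a
    exact extt2 (mul ∘ₗ (mul (t 0 fun _ => a)))
      ((LinearMap.llcomp k S S S (mul (t 0 fun _ => a))) ∘ₗ mul)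
      (fun n b p c => Lassoc_pure a n p b c)
  have Mid : ∀ (a : A) (u v : S),
      mul (mul u (t 0 fun _ => a)) v = mul u (mul (t 0 fun _ => a) v) := by
    intro a u v
    rw [comm u, Lassoc, comm u v, ← Lassoc]
    exact comm _ _
  have Rassoc : ∀ (a : A) (u v : S),
      mul (mul u v) (t 0 fun _ => a) = mul u (mul v (t 0 fun _ => a)) := by
    intro a u v
    rw [comm (mul u v), ← Lassoc, comm (t 0 fun _ => a) u, Mid, comm (t 0 fun _ => a) v]
  -- associativity on pure tensors
  have assoc_pure : ∀ (N m n p : ℕ) (a : Fin (m + 1) → A) (b : Fin (n + 1) → A)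
      (c : Fin (p + 1) → A), m + n + p ≤ N →
      mul (mul (t m a) (t n b)) (t p c) = mul (t m a) (mul (t n b) (t p c)) := by
    intro N
    induction N with
    | zero =>
      intro m n p a b c h
      obtain rfl : m = 0 := by omega
      rw [h1 a]
      exact Lassoc_pure _ _ _ _ _
    | succ N ih =>
      intro m n p a b c h
      match m, n, p, a, b, c, h with
      | 0, n, p, a, b, c, h =>
        rw [h1 a]; exact Lassoc_pure _ _ _ _ _
      | m+1, 0, p, a, b, c, h =>
        rw [h1 b]; exact Mid _ _ _
      | m+1, n+1, 0, a, b, c, h =>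
        rw [h1 c]; exact Rassoc _ _ _
      | m+1, n+1, p+1, a, b, c, h =>
        have hap : t (m+1) a = pre (a 0) (t m (Fin.tail a)) := by
          rw [hpre, Fin.cons_self_tail]
        have hbp : t (n+1) b = pre (b 0) (t n (Fin.tail b)) := by
          rw [hpre, Fin.cons_self_tail]
        have hcp : t (p+1) c = pre (c 0) (t p (Fin.tail c)) := by
          rw [hpre, Fin.cons_self_tail]
        have hPT : pre (1 : A) (mul (t m (Fin.tail a)) (pre 1 (t n (Fin.tail b)))
              + mul (pre 1 (t m (Fin.tail a))) (t n (Fin.tail b))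
              + lam • mul (t m (Fin.tail a)) (t n (Fin.tail b)))
            = mul (pre 1 (t m (Fin.tail a))) (pre 1 (t n (Fin.tail b))) := by
          rw [K, one_mul]
        have hPT' : pre (1 : A) (mul (t n (Fin.tail b)) (pre 1 (t p (Fin.tail c)))
              + mul (pre 1 (t n (Fin.tail b))) (t p (Fin.tail c))
              + lam • mul (t n (Fin.tail b)) (t p (Fin.tail c)))
            = mul (pre 1 (t n (Fin.tail b))) (pre 1 (t p (Fin.tail c))) := by
          rw [K, one_mul]
        have A1 : mul (mul (t m (Fin.tail a)) (pre 1 (t n (Fin.tail b)))) (pre 1 (t p (Fin.tail c)))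
            = mul (t m (Fin.tail a)) (mul (pre 1 (t n (Fin.tail b))) (pre 1 (t p (Fin.tail c)))) := by
          rw [hpre, hpre]
          exact ih m (n+1) (p+1) _ _ _ (by omega)
        have A2 : mul (mul (pre 1 (t m (Fin.tail a))) (t n (Fin.tail b))) (pre 1 (t p (Fin.tail c)))
            = mul (pre 1 (t m (Fin.tail a))) (mul (t n (Fin.tail b)) (pre 1 (t p (Fin.tail c)))) := by
          rw [hpre, hpre]
          exact ih (m+1) n (p+1) _ _ _ (by omega)
        have A3 : mul (mul (t m (Fin.tail a)) (t n (Fin.tail b))) (pre 1 (t p (Fin.tail c)))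
            = mul (t m (Fin.tail a)) (mul (t n (Fin.tail b)) (pre 1 (t p (Fin.tail c)))) := by
          rw [hpre]
          exact ih m n (p+1) _ _ _ (by omega)
        have A4 : mul (mul (pre 1 (t m (Fin.tail a))) (pre 1 (t n (Fin.tail b)))) (t p (Fin.tail c))
            = mul (pre 1 (t m (Fin.tail a))) (mul (pre 1 (t n (Fin.tail b))) (t p (Fin.tail c))) := by
          rw [hpre, hpre]
          exact ih (m+1) (n+1) p _ _ _ (by omega)
        have A5 : mul (mul (t m (Fin.tail a)) (pre 1 (t n (Fin.tail b)))) (t p (Fin.tail c))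
            = mul (t m (Fin.tail a)) (mul (pre 1 (t n (Fin.tail b))) (t p (Fin.tail c))) := by
          rw [hpre]
          exact ih m (n+1) p _ _ _ (by omega)
        have A6 : mul (mul (pre 1 (t m (Fin.tail a))) (t n (Fin.tail b))) (t p (Fin.tail c))
            = mul (pre 1 (t m (Fin.tail a))) (mul (t n (Fin.tail b)) (t p (Fin.tail c))) := by
          rw [hpre]
          exact ih (m+1) n p _ _ _ (by omega)
        have A7 : mul (mul (t m (Fin.tail a)) (t n (Fin.tail b))) (t p (Fin.tail c))
            = mul (t m (Fin.tail a)) (mul (t n (Fin.tail b)) (t p (Fin.tail c))) :=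
          ih m n p _ _ _ (by omega)
        rw [hap, hbp, hcp, K, K, K, K, hPT, hPT', mul_assoc (a 0) (b 0) (c 0)]
        congr 1
        simp only [map_add, map_smul, LinearMap.add_apply, LinearMap.smul_apply, smul_add]
        rw [A1, A2, A3, A4, A5, A6, A7]
        module
  have assoc : ∀ x y z : S, mul (mul x y) z = mul x (mul y z) := by
    have h2 : ∀ (m : ℕ) (a : Fin (m + 1) → A) (y z : S),
        mul (mul (t m a) y) z = mul (t m a) (mul y z) := by
      intro m a
      exact extt2 (mul ∘ₗ (mul (t m a))) ((LinearMap.llcomp k S S S (mul (t m a))) ∘ₗ mul)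
        (fun n b p c => assoc_pure (m + n + p) m n p a b c le_rfl)
    intro x y z
    exact extt1 ((mul.flip z) ∘ₗ (mul.flip y)) (mul.flip (mul y z)) (fun m a => h2 m a y z) x
  have unitl : ∀ x : S, mul (t 0 fun _ => (1 : A)) x = x := by
    intro x
    have := extt1 (mul (t 0 fun _ => (1 : A))) LinearMap.id (fun n b => by
      show mul (t 0 fun _ => (1 : A)) (t n b) = t n b
      rw [h0l]
      simp [Function.update_eq_self]) x
    simpa using this
  have unitr : ∀ x : S, mul x (t 0 fun _ => (1 : A)) = x := fun x =>
    (comm x _).trans (unitl x)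
  exact ⟨comm, assoc, unitl, unitr⟩
end

section
/- Let A be a commutative k-algebra. Define P_A on Ш(A) = ⊕_{i≥1} A^{⊗i} by P_A(x_0⊗⋯⊗x_n) = 1⊗x_0⊗⋯⊗x_n (extended linearly). Then P_A is a Rota-Baxter operator of weight λ on (Ш(A), ⋄): P_A(𝔞)⋄P_A(𝔟) = P_A(𝔞⋄P_A(𝔟)) + P_A(𝔟⋄P_A(𝔞)) + λP_A(𝔞⋄𝔟) for all 𝔞, 𝔟 ∈ Ш(A). -/
/-- The operator `P_A(x_0 ⊗ ⋯ ⊗ x_n) = 1 ⊗ x_0 ⊗ ⋯ ⊗ x_n`, i.e. `pre 1`,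
is a Rota–Baxter operator of weight `λ` on the mixable shuffle algebra
`(Ш(A), ⋄)`, presented abstractly as in the recursion hypotheses below. -/
theorem mixable_shuffle_rota_baxter {k A S : Type*} [CommRing k] [CommRing A]
    [Algebra k A] [AddCommGroup S] [Module k S] (lam : k)
    (t : ∀ n : ℕ, MultilinearMap k (fun _ : Fin (n + 1) => A) S)
    (pre : A →ₗ[k] S →ₗ[k] S)
    (hpre : ∀ (a : A) (n : ℕ) (x : Fin (n + 1) → A),
      pre a (t n x) = t (n + 1) (Fin.cons a x))
    (hspan : Submodule.span k {s : S | ∃ n x, s = t n x} = ⊤)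
    (mul : S →ₗ[k] S →ₗ[k] S)
    (h0l : ∀ (a : A) (n : ℕ) (b : Fin (n + 1) → A),
      mul (t 0 fun _ => a) (t n b) = t n (Function.update b 0 (a * b 0)))
    (h0r : ∀ (n : ℕ) (a : Fin (n + 1) → A) (b : A),
      mul (t n a) (t 0 fun _ => b) = t n (Function.update a 0 (a 0 * b)))
    (hrec : ∀ (m n : ℕ) (a : Fin (m + 2) → A) (b : Fin (n + 2) → A),
      mul (t (m + 1) a) (t (n + 1) b) =
        pre (a 0 * b 0)
          (mul (t m (Fin.tail a)) (t (n + 1) (Fin.cons 1 (Fin.tail b)))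
            + mul (t (m + 1) (Fin.cons 1 (Fin.tail a))) (t n (Fin.tail b))
            + lam • mul (t m (Fin.tail a)) (t n (Fin.tail b)))) :
    ∀ x y : S,
      mul (pre 1 x) (pre 1 y) =
        pre 1 (mul x (pre 1 y)) + pre 1 (mul y (pre 1 x))
          + lam • pre 1 (mul x y) := by
  -- every Fin 1 → A function is constant
  have hfin1 : ∀ a : Fin 1 → A, (fun _ : Fin 1 => a 0) = a :=
    fun a => funext fun i => congrArg a (Subsingleton.elim 0 i)
  -- commutativity on pure tensors, by strong induction on total degree
  have comm_pure : ∀ N m n, m + n ≤ N → ∀ (a : Fin (m+1) → A) (b : Fin (n+1) → A),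
      mul (t m a) (t n b) = mul (t n b) (t m a) := by
    intro N
    induction N with
    | zero =>
      intro m n hmn a b
      obtain ⟨rfl, rfl⟩ : m = 0 ∧ n = 0 := by omega
      rw [← hfin1 a, h0l, h0r]
      simp [hfin1, mul_comm]
    | succ N ih =>
      intro m n hmn a b
      match m, n with
      | 0, n =>
        rw [← hfin1 a, h0l, h0r]
        rw [mul_comm]
      | m+1, 0 =>
        rw [← hfin1 b, h0l, h0r]
        rw [mul_comm]
      | m+1, n+1 =>
        rw [hrec m n a b, hrec n m b a]
        rw [mul_comm (b 0) (a 0)]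
        congr 1
        rw [ih m (n+1) (by omega) (Fin.tail a) (Fin.cons 1 (Fin.tail b)),
            ih (m+1) n (by omega) (Fin.cons 1 (Fin.tail a)) (Fin.tail b),
            ih m n (by omega) (Fin.tail a) (Fin.tail b)]
        abel
  have comm : ∀ x y : S, mul x y = mul y x := by
    have : mul = mul.flip := by
      apply LinearMap.ext_on hspan
      rintro x ⟨m, a, rfl⟩
      apply LinearMap.ext_on hspan
      rintro y ⟨n, b, rfl⟩
      simpa using comm_pure (m + n) m n le_rfl a b
    intro x y
    nth_rewrite 1 [this]
    rfl
  -- the Rota-Baxter identity as an equation of bilinear maps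
  let Lmap : S →ₗ[k] S →ₗ[k] S := ((mul.comp (pre 1)).compl₂ (pre 1))
  let T1 : S →ₗ[k] S →ₗ[k] S := (mul.compl₂ (pre 1)).compr₂ (pre 1)
  let Rmap : S →ₗ[k] S →ₗ[k] S := T1 + T1.flip + lam • (mul.compr₂ (pre 1))
  have key : Lmap = Rmap := by
    apply LinearMap.ext_on hspan
    rintro x ⟨m, a, rfl⟩
    apply LinearMap.ext_on hspan
    rintro y ⟨n, b, rfl⟩
    simp only [Lmap, Rmap, T1, LinearMap.add_apply, LinearMap.compl₂_apply,
      LinearMap.compr₂_apply, LinearMap.comp_apply, LinearMap.flip_apply,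
      LinearMap.smul_apply]
    rw [hpre, hpre, hrec m n]
    simp only [Fin.cons_zero, one_mul, Fin.tail_cons, map_add, map_smul, hpre]
    rw [comm (t n b) (t (m+1) (Fin.cons 1 a))]
  intro x y
  have := LinearMap.congr_fun (LinearMap.congr_fun key x) y
  simpa [Lmap, Rmap, T1] using this
end
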